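/- arXiv:2010.02760 — 2 statements merged into one kernel-verified Lean document; each statement's English description precedes it below -/
import Mathlib

section
/- Let G be a connected simple graph on n vertices of diameter greater than 3 whose complement G^c is connected. Then λ1(G^c) < λ1(H^c(⌊n/2⌋ - 1, ⌈n/2⌉ - 1)). -/
/-!
If `G` is connected with two vertices at distance at least 4, then any two vertices have a
common non-neighbour or are non-adjacent, so `Gᶜ` has diameter at most 2; moreover every vertex
has at least two non-neighbours in `G`. Hence each row of the distance matrix of `Gᶜ` sums to at
most `2(n - 1) - 2 = 2n - 4`, which bounds `λ₁(Gᶜ)`.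

On the other side, `H(s,t)ᶜ` is a double star: connected, on `n = s + t + 2` vertices, with
degrees summing to `2(n - 1)`. In a connected graph the row of `u` sums to at least
`2(n - 1) - deg u`, so the distances of `H(s,t)ᶜ` sum to at least `2(n - 1)²`, and the Rayleigh
quotient at the all-ones vector gives `λ₁(H(s,t)ᶜ) ≥ 2(n - 1)² / n > 2n - 4`.
-/

open SimpleGraph Finset

/-- Distance matrix of a graph. -/
noncomputable def distMatrix {V : Type*} [Fintype V] (G : SimpleGraph V) : Matrix V V ℝ :=
  Matrix.of fun u v => (G.dist u v : ℝ)

/-- Largest eigenvalue of the distance matrix (distance spectral radius). -/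
noncomputable def lam1 {V : Type*} [Fintype V] (G : SimpleGraph V) : ℝ :=
  sSup {μ : ℝ | ∃ x : V → ℝ, x ≠ 0 ∧ (distMatrix G).mulVec x = μ • x}

/-- Least eigenvalue of the distance matrix. -/
noncomputable def lamMin {V : Type*} [Fintype V] (G : SimpleGraph V) : ℝ :=
  sInf {μ : ℝ | ∃ x : V → ℝ, x ≠ 0 ∧ (distMatrix G).mulVec x = μ • x}

/-- `H(s,t)`: complete graph on `s+t` vertices plus vertex `u = s+t` joined to the
first `s` clique vertices and vertex `v = s+t+1` joined to the remaining `t`. -/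
def Hgraph (s t : ℕ) : SimpleGraph (Fin (s + t + 2)) :=
  SimpleGraph.fromRel fun i j =>
    (i.val < s + t ∧ j.val < s + t) ∨
    (i.val = s + t ∧ j.val < s) ∨
    (i.val = s + t + 1 ∧ s ≤ j.val ∧ j.val < s + t)

/-- The double star `T(a,b)`: centers `0, 1`; `a` pendants on `0`, `b` pendants on `1`. -/
def Tdouble (a b : ℕ) : SimpleGraph (Fin (a + b + 2)) :=
  SimpleGraph.fromRel fun i j =>
    (i.val = 0 ∧ j.val = 1) ∨
    (i.val = 0 ∧ 2 ≤ j.val ∧ j.val < a + 2) ∨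
    (i.val = 1 ∧ a + 2 ≤ j.val)

/-- `T1(a,b)`: path `0-1-2` with `a` pendants on `0` and `b` pendants on `2`. -/
def T1graph (a b : ℕ) : SimpleGraph (Fin (a + b + 3)) :=
  SimpleGraph.fromRel fun i j =>
    (i.val = 0 ∧ j.val = 1) ∨ (i.val = 1 ∧ j.val = 2) ∨
    (i.val = 0 ∧ 3 ≤ j.val ∧ j.val < a + 3) ∨
    (i.val = 2 ∧ a + 3 ≤ j.val)

/-- `T2(a,b)`: the double star `T(a,b)` (centers `0,1`, pendants `2..a+1` on `0`,
`a+2..a+b+1` on `1`) with an extra pendant vertex `a+b+2` attached to the pendant `2`. -/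
def T2graph (a b : ℕ) : SimpleGraph (Fin (a + b + 3)) :=
  SimpleGraph.fromRel fun i j =>
    (i.val = 0 ∧ j.val = 1) ∨
    (i.val = 0 ∧ 2 ≤ j.val ∧ j.val < a + 2) ∨
    (i.val = 1 ∧ a + 2 ≤ j.val ∧ j.val < a + b + 2) ∨
    (i.val = 2 ∧ j.val = a + b + 2)

/-- `B1(p,q)`: complete bipartite graph with parts `{0,…,p-1}` and `{p,…,p+q-1}`
minus the edge between `u = 0` and `v = p`. -/
def B1graph (p q : ℕ) : SimpleGraph (Fin (p + q)) :=
  SimpleGraph.fromRel fun i j =>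
    i.val < p ∧ p ≤ j.val ∧ ¬(i.val = 0 ∧ j.val = p)

/-- `B2(p,q)`: `B1(p,q)` where all edges at `w = 1` except the edge to `v = p` are deleted. -/
def B2graph (p q : ℕ) : SimpleGraph (Fin (p + q)) :=
  SimpleGraph.fromRel fun i j =>
    i.val < p ∧ p ≤ j.val ∧ ¬(i.val = 0 ∧ j.val = p) ∧ (i.val = 1 → j.val = p)

/-- `L'` on `n` vertices: `K_{n-2}` on `{0,…,n-3}` minus the edge `wu` (`w = 0`, `u = 1`),
with a pendant `w' = n-2` at `w` and a pendant `v = n-1` at `u`. -/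
def L'graph (n : ℕ) : SimpleGraph (Fin n) :=
  SimpleGraph.fromRel fun i j =>
    (i.val < n - 2 ∧ j.val < n - 2 ∧ ¬(i.val = 0 ∧ j.val = 1) ∧ ¬(i.val = 1 ∧ j.val = 0)) ∨
    (i.val = 0 ∧ j.val = n - 2) ∨
    (i.val = 1 ∧ j.val = n - 1)

/-- `L(p,q)`: disjoint union of `K_p` on `{0,…,p-1}` (minus the edge `wu`, `w = 0`, `u = 1`)
and `K_q` on `{p,…,p+q-1}`, plus the edge from `u = 1` to `v = p`. -/
def Lgraph (p q : ℕ) : SimpleGraph (Fin (p + q)) :=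
  SimpleGraph.fromRel fun i j =>
    (i.val < p ∧ j.val < p ∧ ¬(i.val = 0 ∧ j.val = 1) ∧ ¬(i.val = 1 ∧ j.val = 0)) ∨
    (p ≤ i.val ∧ p ≤ j.val) ∨
    (i.val = 1 ∧ j.val = p)

/-- The star `K_{1,n-1}` on `n` vertices with center `0`. -/
def starGraph (n : ℕ) : SimpleGraph (Fin n) :=
  SimpleGraph.fromRel fun i _ => i.val = 0

open Matrix

section Spectral

variable {ι : Type*} [Fintype ι] [DecidableEq ι]

theorem Matrix.eigenvalue_le_of_sum_row_le {A : Matrix ι ι ℝ} (hA : ∀ i j, 0 ≤ A i j)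
    {R : ℝ} (hR : ∀ i, ∑ j, A i j ≤ R) {μ : ℝ} {x : ι → ℝ} (hx : x ≠ 0)
    (hμ : A *ᵥ x = μ • x) : μ ≤ R := by
  obtain ⟨k, hk⟩ := eigenvalue_mem_ball (A := A) <| Module.End.hasEigenvalue_of_hasEigenvector
    ⟨Module.End.mem_eigenspace_iff.mpr (by rwa [Matrix.toLin'_apply]), hx⟩
  rw [Metric.mem_closedBall, Real.dist_eq] at hk
  have hrow : A k k + ∑ j ∈ univ.erase k, ‖A k j‖ = ∑ j, A k j := by
    simp_rw [Real.norm_of_nonneg (hA k _)]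
    exact add_sum_erase _ _ (mem_univ k)
  linarith [le_abs_self (μ - A k k), hR k]

theorem Matrix.IsHermitian.exists_eigenvalue_rayleigh_le {A : Matrix ι ι ℝ} (hA : A.IsHermitian)
    {y : ι → ℝ} (hy : y ≠ 0) :
    ∃ μ, (∃ x, x ≠ 0 ∧ A *ᵥ x = μ • x) ∧ y ⬝ᵥ A *ᵥ y ≤ μ * (y ⬝ᵥ y) := by
  set T := Matrix.toEuclideanLin A
  set y' : EuclideanSpace ℝ ι := WithLp.toLp 2 y
  have hy' : y' ≠ 0 := by simpa [y'] using hy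
  have : Nontrivial (EuclideanSpace ℝ ι) := ⟨⟨y', 0, hy'⟩⟩
  obtain ⟨v, hv⟩ := (Matrix.isSymmetric_toEuclideanLin_iff.mpr hA)
    |>.hasEigenvalue_iSup_of_finiteDimensional.exists_hasEigenvector
  refine ⟨_, ⟨WithLp.ofLp v, by simpa using hv.2, congrArg WithLp.ofLp hv.apply_eq_smul⟩, ?_⟩
  have hbdd : BddAbove (Set.range fun x : {x : EuclideanSpace ℝ ι // x ≠ 0} =>
      RCLike.re (inner ℝ (T x) (x : EuclideanSpace ℝ ι)) / ‖(x : EuclideanSpace ℝ ι)‖ ^ 2) := by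
    refine ⟨‖LinearMap.toContinuousLinearMap T‖, ?_⟩
    rintro _ ⟨x, rfl⟩
    exact (le_abs_self _).trans ((LinearMap.toContinuousLinearMap T).rayleighQuotient_le_norm x)
  have hnum : inner ℝ (T y') y' = y ⬝ᵥ A *ᵥ y := by
    simp [T, y', EuclideanSpace.inner_eq_star_dotProduct]
  have hden : ‖y'‖ ^ 2 = y ⬝ᵥ y := by
    rw [← real_inner_self_eq_norm_sq, EuclideanSpace.inner_eq_star_dotProduct]
    rfl
  have hray := le_ciSup hbdd ⟨y', hy'⟩
  simp only [RCLike.re_to_real, hnum, hden] at hray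
  rwa [← div_le_iff₀ (hden ▸ by positivity)]

end Spectral

section DistanceMatrix

variable {V : Type*} [Fintype V]

theorem distMatrix_isHermitian (G : SimpleGraph V) : (distMatrix G).IsHermitian := by
  ext i j
  simp [distMatrix, dist_comm]

theorem lam1_le_of_sum_dist_le (G : SimpleGraph V) {R : ℝ} (hR₀ : 0 ≤ R)
    (hR : ∀ u, ∑ v, (G.dist u v : ℝ) ≤ R) : lam1 G ≤ R := by
  classical
  refine Real.sSup_le ?_ hR₀
  rintro μ ⟨x, hx, hμ⟩
  exact eigenvalue_le_of_sum_row_le (fun _ _ => Nat.cast_nonneg _) hR hx hμ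

theorem sum_dist_div_card_le_lam1 [Nonempty V] (G : SimpleGraph V) :
    (∑ u, ∑ v, (G.dist u v : ℝ)) / Fintype.card V ≤ lam1 G := by
  classical
  obtain ⟨μ, ⟨x, hx, hμ⟩, hray⟩ :=
    (distMatrix_isHermitian G).exists_eigenvalue_rayleigh_le (y := 1) one_ne_zero
  have hbdd : BddAbove {μ : ℝ | ∃ x : V → ℝ, x ≠ 0 ∧ distMatrix G *ᵥ x = μ • x} := by
    refine ⟨∑ u, ∑ v, (G.dist u v : ℝ), ?_⟩
    rintro μ ⟨x, hx, hμ⟩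
    refine eigenvalue_le_of_sum_row_le (fun _ _ => Nat.cast_nonneg _) (fun u => ?_) hx hμ
    exact single_le_sum (f := fun u => ∑ v, (G.dist u v : ℝ))
      (fun u _ => sum_nonneg fun v _ => Nat.cast_nonneg _) (mem_univ u)
  calc (∑ u, ∑ v, (G.dist u v : ℝ)) / Fintype.card V ≤ μ := by
        rw [div_le_iff₀ (by positivity)]
        simpa [distMatrix, dotProduct, mulVec] using hray
    _ ≤ lam1 G := le_csSup hbdd ⟨x, hx, hμ⟩

end DistanceMatrix

section RowSum

variable {V : Type*} [Fintype V] [DecidableEq V] (H : SimpleGraph V) [DecidableRel H.Adj]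

theorem sum_dist_add_degree_add_two (u : V) :
    ∑ v, H.dist u v + H.degree u + 2 =
      ∑ v, (H.dist u v + (if H.Adj u v then 1 else 0) + if v = u then 2 else 0) := by
  have hdeg := H.degree_eq_sum_if_adj (R := ℕ) u
  rw [Nat.cast_id] at hdeg
  simp [sum_add_distrib, hdeg]

theorem sum_dist_add_degree_le {u : V} (h : ∀ v, H.dist u v ≤ 2) :
    ∑ v, H.dist u v + H.degree u + 2 ≤ 2 * Fintype.card V := by
  rw [sum_dist_add_degree_add_two]
  calc _ ≤ ∑ _v : V, 2 := sum_le_sum fun v _ => ?_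
    _ = 2 * Fintype.card V := by simp [mul_comm]
  by_cases hv : v = u
  · simp [hv]
  by_cases hadj : H.Adj u v
  · simp [hv, hadj, dist_eq_one_iff_adj.mpr hadj]
  · simpa [hv, hadj] using h v

theorem two_mul_card_le_sum_dist_add_degree (hH : H.Connected) (u : V) :
    2 * Fintype.card V ≤ ∑ v, H.dist u v + H.degree u + 2 := by
  rw [sum_dist_add_degree_add_two]
  calc 2 * Fintype.card V = ∑ _v : V, 2 := by simp [mul_comm]
    _ ≤ _ := sum_le_sum fun v _ => ?_
  by_cases hv : v = u
  · simp [hv]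
  by_cases hadj : H.Adj u v
  · simp [hv, hadj, dist_eq_one_iff_adj.mpr hadj]
  · simp only [hv, hadj, if_false, add_zero]
    exact hH.one_lt_dist_of_ne_of_not_adj (Ne.symm hv) hadj

end RowSum

section Complement

variable {V : Type*} {G : SimpleGraph V}

theorem compl_adj_of_two_le_dist {u v : V} (h : 2 ≤ G.dist u v) : Gᶜ.Adj u v := by
  refine (compl_adj G u v).mpr ⟨?_, fun hadj => ?_⟩
  · rintro rfl
    simp at h
  · rw [dist_eq_one_iff_adj.mpr hadj] at h
    omega

theorem exists_adj_two_le_dist (hG : G.Connected) {u c : V} (hc : 3 ≤ G.dist u c) :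
    ∃ w, G.Adj c w ∧ 2 ≤ G.dist u w := by
  obtain ⟨p⟩ := hG.preconnected c u
  cases p with
  | nil => simp at hc
  | @cons _ w _ hcw _ =>
    have := hG.dist_triangle (u := u) (v := w) (w := c)
    rw [dist_comm (u := w), dist_eq_one_iff_adj.mpr hcw] at this
    exact ⟨w, hcw, by omega⟩

variable (hG : G.Connected) {a b : V} (hab : 3 < G.dist a b)
include hG hab

theorem exists_two_le_dist_of_dist_le_one {u v : V} (huv : G.dist u v ≤ 1) :
    ∃ w, 2 ≤ G.dist u w ∧ 2 ≤ G.dist v w := by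
  by_contra! h
  -- otherwise `a` and `b` both lie within distance 1 of `u` or `v`, forcing `d(a, b) ≤ 3`
  have := h a
  have := h b
  have := hG.dist_triangle (u := a) (v := u) (w := b)
  have := hG.dist_triangle (u := a) (v := v) (w := b)
  have := hG.dist_triangle (u := u) (v := v) (w := b)
  have := hG.dist_triangle (u := v) (v := u) (w := b)
  simp only [dist_comm (u := a), dist_comm (v := u) (u := v)] at *
  omega

theorem dist_compl_le_two (u v : V) : Gᶜ.dist u v ≤ 2 := by
  by_cases huv : 2 ≤ G.dist u v
  · exact (dist_eq_one_iff_adj.mpr (compl_adj_of_two_le_dist huv)).trans_le one_le_two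
  obtain ⟨w, huw, hvw⟩ := exists_two_le_dist_of_dist_le_one hG hab (u := u) (v := v) (by omega)
  exact (dist_le (Walk.cons (compl_adj_of_two_le_dist huw)
    (compl_adj_of_two_le_dist hvw).symm.toWalk)).trans_eq rfl

theorem exists_compl_adj_pair (u : V) :
    ∃ v₁ v₂, v₁ ≠ v₂ ∧ Gᶜ.Adj u v₁ ∧ Gᶜ.Adj u v₂ := by
  have pair_of_far : ∀ c, 3 ≤ G.dist u c → ∃ v₁ v₂, v₁ ≠ v₂ ∧ Gᶜ.Adj u v₁ ∧ Gᶜ.Adj u v₂ := by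
    intro c hc
    obtain ⟨w, hcw, hw⟩ := exists_adj_two_le_dist hG hc
    exact ⟨c, w, hcw.ne, compl_adj_of_two_le_dist (by omega), compl_adj_of_two_le_dist hw⟩
  have := hG.dist_triangle (u := a) (v := u) (w := b)
  rw [dist_comm (u := a) (v := u)] at this
  rcases le_or_gt 3 (G.dist u a) with ha | ha
  · exact pair_of_far a ha
  rcases le_or_gt 3 (G.dist u b) with hb | hb
  · exact pair_of_far b hb
  refine ⟨a, b, ?_, compl_adj_of_two_le_dist (by omega), compl_adj_of_two_le_dist (by omega)⟩
  rintro rfl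
  simp at hab

theorem sum_dist_compl_add_four_le [Fintype V] (u : V) :
    ∑ v, Gᶜ.dist u v + 4 ≤ 2 * Fintype.card V := by
  classical
  obtain ⟨v₁, v₂, hne, h₁, h₂⟩ := exists_compl_adj_pair hG hab u
  have hdeg : 2 ≤ Gᶜ.degree u := by
    rw [← card_neighborFinset_eq_degree]
    exact one_lt_card.mpr ⟨v₁, by simpa using h₁, v₂, by simpa using h₂, hne⟩
  have := sum_dist_add_degree_le Gᶜ (dist_compl_le_two hG hab u)
  omega

theorem lam1_compl_le [Fintype V] : lam1 Gᶜ ≤ 2 * Fintype.card V - 4 := by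
  have hrow := sum_dist_compl_add_four_le hG hab
  refine lam1_le_of_sum_dist_le _ ?_ fun u => ?_
  · have : (4 : ℝ) ≤ 2 * Fintype.card V := by exact_mod_cast (le_add_self).trans (hrow a)
    linarith
  · have : (∑ v, Gᶜ.dist u v : ℝ) + 4 ≤ 2 * Fintype.card V := by exact_mod_cast hrow u
    linarith

end Complement

section HGraph

theorem compl_hgraph_adj (s t : ℕ) (a b : Fin (s + t + 2)) :
    (Hgraph s t)ᶜ.Adj a b ↔
      (a.val < s ∧ b.val = s + t + 1) ∨ (b.val < s ∧ a.val = s + t + 1) ∨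
      (s ≤ a.val ∧ a.val < s + t ∧ b.val = s + t) ∨ (s ≤ b.val ∧ b.val < s + t ∧ a.val = s + t) ∨
      (a.val = s + t ∧ b.val = s + t + 1) ∨ (a.val = s + t + 1 ∧ b.val = s + t) := by
  have := a.isLt
  have := b.isLt
  rw [compl_adj, Hgraph, fromRel_adj]
  simp only [ne_eq, Fin.ext_iff]
  omega

theorem connected_compl_hgraph (s t : ℕ) : (Hgraph s t)ᶜ.Connected := by
  let u : Fin (s + t + 2) := ⟨s + t, by omega⟩
  let v : Fin (s + t + 2) := ⟨s + t + 1, by omega⟩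
  have huv : (Hgraph s t)ᶜ.Adj u v := (compl_hgraph_adj s t u v).mpr (by simp [u, v])
  rw [connected_iff_exists_forall_reachable]
  refine ⟨u, fun w => ?_⟩
  have := w.isLt
  by_cases hw : w = u
  · rw [hw]
  by_cases hwv : w = v
  · exact hwv ▸ huv.reachable
  rw [Fin.ext_iff] at hw hwv
  by_cases hws : w.val < s
  · exact huv.reachable.trans (Adj.reachable ((compl_hgraph_adj s t v w).mpr (by simp [v, hws])))
  · exact Adj.reachable ((compl_hgraph_adj s t u w).mpr (by simp only [u, v, and_true] at hw hwv ⊢; omega))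

theorem degree_le_card_of_val_mem {m : ℕ} (H : SimpleGraph (Fin m)) [DecidableRel H.Adj]
    (i : Fin m) (S : Finset ℕ) (hS : ∀ j, H.Adj i j → j.val ∈ S) : H.degree i ≤ #S := by
  rw [← card_neighborFinset_eq_degree]
  refine card_le_card_of_injOn Fin.val (fun j hj => hS j ?_) Fin.val_injective.injOn
  simpa using hj

theorem sum_degree_compl_hgraph_le (s t : ℕ) [DecidableRel (Hgraph s t)ᶜ.Adj] :
    ∑ i, (Hgraph s t)ᶜ.degree i ≤ 2 * (s + t) + 2 := by
  have hclique : ∀ i : Fin (s + t), (Hgraph s t)ᶜ.degree i.castSucc.castSucc ≤ 1 := by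
    intro i
    refine degree_le_card_of_val_mem _ _ {if i.val < s then s + t + 1 else s + t} fun j hj => ?_
    have := i.isLt
    rw [compl_hgraph_adj] at hj
    simp only [Fin.val_castSucc, mem_singleton] at hj ⊢
    split_ifs <;> omega
  have hu : (Hgraph s t)ᶜ.degree (Fin.last (s + t)).castSucc ≤ t + 1 := by
    refine (degree_le_card_of_val_mem _ _ (insert (s + t + 1) (Ico s (s + t))) fun j hj => ?_).trans
      ((card_insert_le _ _).trans (by simp))
    rw [compl_hgraph_adj] at hj
    simp only [Fin.val_castSucc, Fin.val_last, mem_insert, mem_Ico] at hj ⊢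
    omega
  have hv : (Hgraph s t)ᶜ.degree (Fin.last (s + t + 1)) ≤ s + 1 := by
    refine (degree_le_card_of_val_mem _ _ (insert (s + t) (range s)) fun j hj => ?_).trans
      ((card_insert_le _ _).trans (by simp))
    rw [compl_hgraph_adj] at hj
    simp only [Fin.val_last, mem_insert, mem_range] at hj ⊢
    omega
  have hsum := sum_le_sum fun i (_ : i ∈ univ) => hclique i
  simp only [sum_const, card_univ, Fintype.card_fin, smul_eq_mul, mul_one] at hsum
  rw [Fin.sum_univ_castSucc, Fin.sum_univ_castSucc]
  omega

theorem two_mul_sq_le_sum_sum_dist_compl_hgraph (s t : ℕ) :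
    2 * (s + t + 1) ^ 2 ≤ ∑ i, ∑ j, (Hgraph s t)ᶜ.dist i j := by
  classical
  have hrow := sum_le_sum fun i (_ : i ∈ univ) =>
    two_mul_card_le_sum_dist_add_degree _ (connected_compl_hgraph s t) i
  simp only [sum_add_distrib, sum_const, card_univ, Fintype.card_fin, smul_eq_mul] at hrow
  have := sum_degree_compl_hgraph_le s t
  nlinarith

theorem two_mul_lt_lam1_compl_hgraph (s t : ℕ) : 2 * ((s : ℝ) + t) < lam1 (Hgraph s t)ᶜ := by
  have hD : 2 * ((s : ℝ) + t + 1) ^ 2 ≤ ∑ i, ∑ j, ((Hgraph s t)ᶜ.dist i j : ℝ) := by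
    exact_mod_cast two_mul_sq_le_sum_sum_dist_compl_hgraph s t
  refine lt_of_lt_of_le ?_ (sum_dist_div_card_le_lam1 _)
  rw [Fintype.card_fin, lt_div_iff₀ (by positivity)]
  push_cast
  nlinarith

end HGraph

theorem stmt_4_general {V : Type*} [Fintype V] (n : ℕ) (G : SimpleGraph V)
    (hcard : Fintype.card V = n)
    (hconn : G.Connected)
    (hdiam : ∃ u v : V, 3 < G.dist u v) :
    lam1 Gᶜ < lam1 (Hgraph (n / 2 - 1) ((n + 1) / 2 - 1))ᶜ := by
  obtain ⟨a, b, hab⟩ := hdiam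
  have hn : 2 ≤ n := by
    have := sum_dist_compl_add_four_le hconn hab a
    omega
  have hst : n / 2 - 1 + ((n + 1) / 2 - 1) = n - 2 := by omega
  calc lam1 Gᶜ ≤ 2 * n - 4 := hcard ▸ lam1_compl_le hconn hab
    _ = 2 * ((n / 2 - 1 : ℕ) + ((n + 1) / 2 - 1 : ℕ) : ℝ) := by
      rw [← Nat.cast_add, hst, Nat.cast_sub hn]
      ring
    _ < _ := two_mul_lt_lam1_compl_hgraph _ _

/-- For `G` connected on `n` vertices of diameter `> 3` with `Gᶜ` connected,
`λ₁(Gᶜ) < λ₁(H(⌊n/2⌋-1, ⌈n/2⌉-1)ᶜ)`. -/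
theorem stmt_4 {V : Type*} [Fintype V] (n : ℕ) (G : SimpleGraph V)
    (hcard : Fintype.card V = n)
    (hconn : G.Connected) (hcc : Gᶜ.Connected)
    (hdiam : ∃ u v : V, 3 < G.dist u v) :
    lam1 Gᶜ < lam1 (Hgraph (n / 2 - 1) ((n + 1) / 2 - 1))ᶜ :=
  stmt_4_general n G hcard hconn hdiam
end

section
/- Let G be a connected simple graph of diameter greater than 3 whose complement G^c is connected, let e be an edge of G such that the graph G' = G - e obtained by deleting e from G is connected, and suppose G'^c is connected. Then λ1(G'^c) ≤ λ1(G^c). -/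
/-!
Deleting `e` from `G` adds `e` to `Gᶜ`, and adding an edge to a connected graph can only shorten
distances, so `D((G - e)ᶜ) ≤ D(Gᶜ)` entrywise. The largest eigenvalue of a symmetric matrix is the
maximum of its Rayleigh quotient, and for a nonnegative matrix `A ≤ B` a top eigenvector `y` of `A`
gives `λ₁(A) ‖y‖² = yᵀ A y ≤ |y|ᵀ A |y| ≤ |y|ᵀ B |y| ≤ λ₁(B) ‖y‖²`.
-/

open SimpleGraph Finset

open scoped InnerProductSpace
open WithLp (toLp)

namespace LinearMap

variable {E : Type*} [NormedAddCommGroup E] [InnerProductSpace ℝ E] [FiniteDimensional ℝ E]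

theorem bddAbove_rayleigh (T : E →ₗ[ℝ] E) :
    BddAbove (Set.range fun x : {x : E // x ≠ 0} => ⟪T x, x⟫_ℝ / ‖(x : E)‖ ^ 2) :=
  ⟨‖T.toContinuousLinearMap‖, by
    rintro _ ⟨x, rfl⟩
    exact (le_abs_self _).trans (T.toContinuousLinearMap.rayleighQuotient_le_norm x)⟩

theorem inner_le_iSup_rayleigh_mul (T : E →ₗ[ℝ] E) {x : E} (hx : x ≠ 0) :
    ⟪T x, x⟫_ℝ ≤ (⨆ y : {y : E // y ≠ 0}, ⟪T y, y⟫_ℝ / ‖(y : E)‖ ^ 2) * ‖x‖ ^ 2 := by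
  rw [← div_le_iff₀ (by positivity)]
  exact le_ciSup T.bddAbove_rayleigh ⟨x, hx⟩

end LinearMap

namespace Matrix

variable {n : Type*} [Fintype n]

-- `lam1 G` is `sSup (distMatrix G).eigenvalueSet` definitionally.
def eigenvalueSet (A : Matrix n n ℝ) : Set ℝ :=
  {μ | ∃ x : n → ℝ, x ≠ 0 ∧ A *ᵥ x = μ • x}

theorem IsHermitian.isGreatest_eigenvalueSet [DecidableEq n] [Nonempty n] {A : Matrix n n ℝ}
    (hA : A.IsHermitian) :
    IsGreatest A.eigenvalueSet
      (⨆ y : {y : EuclideanSpace ℝ n // y ≠ 0},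
        ⟪A.toEuclideanLin y, y⟫_ℝ / ‖(y : EuclideanSpace ℝ n)‖ ^ 2) := by
  constructor
  · obtain ⟨x, hx, hx0⟩ :=
      (isSymmetric_toEuclideanLin_iff.mpr hA).hasEigenvalue_iSup_of_finiteDimensional
        |>.exists_hasEigenvector
    exact ⟨x.ofLp, by simpa using hx0, congrArg WithLp.ofLp (Module.End.mem_eigenspace_iff.mp hx)⟩
  · rintro μ ⟨x, hx0, hx⟩
    have hy0 : toLp 2 x ≠ 0 := by simpa using hx0
    have hμ := A.toEuclideanLin.inner_le_iSup_rayleigh_mul hy0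
    have hAy : A.toEuclideanLin (toLp 2 x) = μ • toLp 2 x := congrArg (toLp 2) hx
    rw [hAy, real_inner_smul_left, real_inner_self_eq_norm_sq] at hμ
    exact le_of_mul_le_mul_right hμ (by positivity)

theorem IsHermitian.sSup_eigenvalueSet_mem [Nonempty n] {A : Matrix n n ℝ} (hA : A.IsHermitian) :
    sSup A.eigenvalueSet ∈ A.eigenvalueSet := by
  classical
  exact hA.isGreatest_eigenvalueSet.csSup_mem

theorem IsHermitian.dotProduct_mulVec_le [Nonempty n] {A : Matrix n n ℝ} (hA : A.IsHermitian)
    (x : n → ℝ) : x ⬝ᵥ A *ᵥ x ≤ sSup A.eigenvalueSet * (x ⬝ᵥ x) := by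
  classical
  rcases eq_or_ne x 0 with rfl | hx
  · simp
  rw [hA.isGreatest_eigenvalueSet.csSup_eq]
  have hy0 : toLp 2 x ≠ 0 := by simpa using hx
  have h := A.toEuclideanLin.inner_le_iSup_rayleigh_mul hy0
  rw [← real_inner_self_eq_norm_sq] at h
  exact h

theorem dotProduct_mulVec_le_abs {A : Matrix n n ℝ} (hA : ∀ i j, 0 ≤ A i j) (x : n → ℝ) :
    x ⬝ᵥ A *ᵥ x ≤ |x| ⬝ᵥ A *ᵥ |x| := by
  simp only [dotProduct, mulVec, Finset.mul_sum, Pi.abs_apply]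
  refine Finset.sum_le_sum fun i _ => Finset.sum_le_sum fun j _ => ?_
  calc x i * (A i j * x j) = A i j * (x i * x j) := by ring
    _ ≤ A i j * (|x i| * |x j|) :=
      mul_le_mul_of_nonneg_left (abs_mul (x i) (x j) ▸ le_abs_self _) (hA i j)
    _ = |x i| * (A i j * |x j|) := by ring

theorem dotProduct_mulVec_mono {A B : Matrix n n ℝ} (hAB : ∀ i j, A i j ≤ B i j) {x : n → ℝ}
    (hx : 0 ≤ x) : x ⬝ᵥ A *ᵥ x ≤ x ⬝ᵥ B *ᵥ x := by
  simp only [dotProduct, mulVec, Finset.mul_sum]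
  exact Finset.sum_le_sum fun i _ => Finset.sum_le_sum fun j _ =>
    mul_le_mul_of_nonneg_left (mul_le_mul_of_nonneg_right (hAB i j) (hx j)) (hx i)

theorem sSup_eigenvalueSet_le_of_le [Nonempty n] {A B : Matrix n n ℝ} (hA : A.IsHermitian)
    (hB : B.IsHermitian) (hA₀ : ∀ i j, 0 ≤ A i j) (hAB : ∀ i j, A i j ≤ B i j) :
    sSup A.eigenvalueSet ≤ sSup B.eigenvalueSet := by
  obtain ⟨y, hy0, hy⟩ := hA.sSup_eigenvalueSet_mem
  have hyy : 0 < y ⬝ᵥ y := by simpa using dotProduct_self_star_pos_iff.mpr hy0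
  refine le_of_mul_le_mul_right ?_ hyy
  calc sSup A.eigenvalueSet * (y ⬝ᵥ y) = y ⬝ᵥ A *ᵥ y := by rw [hy, dotProduct_smul, smul_eq_mul]
    _ ≤ |y| ⬝ᵥ A *ᵥ |y| := dotProduct_mulVec_le_abs hA₀ y
    _ ≤ |y| ⬝ᵥ B *ᵥ |y| := dotProduct_mulVec_mono hAB (abs_nonneg y)
    _ ≤ sSup B.eigenvalueSet * (|y| ⬝ᵥ |y|) := hB.dotProduct_mulVec_le |y|
    _ = sSup B.eigenvalueSet * (y ⬝ᵥ y) := by simp [dotProduct, abs_mul_abs_self]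

end Matrix

namespace SimpleGraph

variable {V : Type*} [Fintype V]

theorem isHermitian_distMatrix (G : SimpleGraph V) : (distMatrix G).IsHermitian := by
  ext u v
  simp [distMatrix, dist_comm]

theorem Connected.lam1_anti {G G' : SimpleGraph V} (hG : G.Connected) (h : G ≤ G') :
    lam1 G' ≤ lam1 G :=
  haveI := hG.nonempty
  Matrix.sSup_eigenvalueSet_le_of_le (isHermitian_distMatrix G') (isHermitian_distMatrix G)
    (fun _ _ => Nat.cast_nonneg _)
    (fun u v => by simpa only [distMatrix, Matrix.of_apply, Nat.cast_le]
      using (hG.preconnected u v).dist_anti h)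

end SimpleGraph

theorem stmt_5_general {V : Type*} [Fintype V] (G : SimpleGraph V)
    (hcc : Gᶜ.Connected)
    (e : Sym2 V) :
    lam1 (G.deleteEdges {e})ᶜ ≤ lam1 Gᶜ :=
  hcc.lam1_anti (compl_le_compl (G.deleteEdges_le _))

/-- If `G` is connected of diameter `> 3` with `Gᶜ` connected, `e` is an edge
of `G` such that `G' = G - e` is connected and `G'ᶜ` is connected, then `λ₁(G'ᶜ) ≤ λ₁(Gᶜ)`. -/
theorem stmt_5 {V : Type*} [Fintype V] (G : SimpleGraph V)
    (hconn : G.Connected) (hcc : Gᶜ.Connected)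
    (hdiam : ∃ u v : V, 3 < G.dist u v)
    (e : Sym2 V) (he : e ∈ G.edgeSet)
    (hconn' : (G.deleteEdges {e}).Connected) (hcc' : (G.deleteEdges {e})ᶜ.Connected) :
    lam1 (G.deleteEdges {e})ᶜ ≤ lam1 Gᶜ :=
  stmt_5_general G hcc e
end
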